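/- Let G, H be well-tempered scoring games. Then R(G + H) ≥ R(G) + R(H) - max(π(H)·gap_{π(G)}(G), π(G)·gap_{π(H)}(H)) and L(G + H) ≥ L(G) + R(H) - max(π(H)·gap_{1-π(G)}(G), (1-π(G))·gap_{π(H)}(H)), where i·n means n if i=1 and 0 if i=0 (even when n = -∞). -/

import Mathlib

/-- Well-tempered scoring game trees: an integer (final score) or a position
with lists of Left and Right options. -/
inductive WT : Type where
  | int : ℤ → WT
  | node : List WT → List WT → WT

namespace WT

/-- Left options. -/
def lopts : WT → List WT
  | int _ => []
  | node L _ => L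

/-- Right options. -/
def ropts : WT → List WT
  | int _ => []
  | node _ R => R

theorem sizeOf_lt_of_mem_lopts : ∀ {G g : WT}, g ∈ G.lopts → sizeOf g < sizeOf G := by
  intro G g h
  cases G with
  | int n => simp [lopts] at h
  | node L R =>
    simp only [lopts] at h
    have h1 := List.sizeOf_lt_of_mem h
    have h2 : sizeOf (WT.node L R) = 1 + sizeOf L + sizeOf R := by simp
    omega

theorem sizeOf_lt_of_mem_ropts : ∀ {G g : WT}, g ∈ G.ropts → sizeOf g < sizeOf G := by
  intro G g h
  cases G with
  | int n => simp [ropts] at h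
  | node L R =>
    simp only [ropts] at h
    have h1 := List.sizeOf_lt_of_mem h
    have h2 : sizeOf (WT.node L R) = 1 + sizeOf L + sizeOf R := by simp
    omega

/-- Disjunctive sum of two games. -/
def add (G H : WT) : WT :=
  match G, H with
  | int m, int n => int (m + n)
  | G, H =>
    node ((G.lopts.attach.map fun g => add g.1 H) ++ (H.lopts.attach.map fun h => add G h.1))
         ((G.ropts.attach.map fun g => add g.1 H) ++ (H.ropts.attach.map fun h => add G h.1))
termination_by sizeOf G + sizeOf H
decreasing_by
  all_goals
    first
      | (have := sizeOf_lt_of_mem_lopts g.2; omega)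
      | (have := sizeOf_lt_of_mem_lopts h.2; omega)
      | (have := sizeOf_lt_of_mem_ropts g.2; omega)
      | (have := sizeOf_lt_of_mem_ropts h.2; omega)

/-- Negation of a game: swap players and negate scores. -/
def neg : WT → WT
  | int n => int (-n)
  | node L R =>
    node ((WT.node L R).ropts.attach.map fun g => neg g.1)
         ((WT.node L R).lopts.attach.map fun g => neg g.1)
termination_by G => sizeOf G
decreasing_by
  all_goals
    first
      | exact sizeOf_lt_of_mem_lopts g.2
      | exact sizeOf_lt_of_mem_ropts g.2

def lmax : List ℤ → ℤ
  | [] => 0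
  | x :: xs => xs.foldl max x

def lmin : List ℤ → ℤ
  | [] => 0
  | x :: xs => xs.foldl min x

/-- The pair (left outcome, right outcome). -/
def out : WT → ℤ × ℤ
  | int n => (n, n)
  | node L R =>
    (lmax ((WT.node L R).lopts.attach.map fun g => (out g.1).2),
     lmin ((WT.node L R).ropts.attach.map fun g => (out g.1).1))
termination_by G => sizeOf G
decreasing_by
  all_goals
    first
      | exact sizeOf_lt_of_mem_lopts g.2
      | exact sizeOf_lt_of_mem_ropts g.2

/-- Left outcome L(G): optimal score when Left moves first. -/
def Lout (G : WT) : ℤ := G.out.1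

/-- Right outcome R(G): optimal score when Right moves first. -/
def Rout (G : WT) : ℤ := G.out.2

/-- `IsWT G p` : `G` is a well-tempered game of parity `p`
(`false` = even-tempered, `true` = odd-tempered). -/
inductive IsWT : WT → Bool → Prop where
  | int (n : ℤ) : IsWT (WT.int n) false
  | node {L R : List WT} {p : Bool} (hL : L ≠ []) (hR : R ≠ [])
      (hLp : ∀ g ∈ L, IsWT g p) (hRp : ∀ g ∈ R, IsWT g p) :
      IsWT (WT.node L R) (!p)

/-- `G` is a well-tempered game (of some parity). -/
def Wt (G : WT) : Prop := ∃ p, IsWT G p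

/-- Parity, computed structurally (`false` = even-tempered, `true` = odd-tempered;
agrees with `IsWT` on well-tempered games). -/
def par : WT → Bool
  | int _ => false
  | node [] _ => true
  | node (g :: _) _ => !(par g)

/-- Final score under optimal play when Left moves last. -/
def Lf (G : WT) : ℤ := if G.par then G.Lout else G.Rout

/-- Final score under optimal play when Right moves last. -/
def Rf (G : WT) : ℤ := if G.par then G.Rout else G.Lout

/-- `G ≲ H` : for every well-tempered `X`, `L(G+X) ≤ L(H+X)` and `R(G+X) ≤ R(H+X)`. -/
def Le (G H : WT) : Prop :=
  ∀ X : WT, X.Wt → (G.add X).Lout ≤ (H.add X).Lout ∧ (G.add X).Rout ≤ (H.add X).Rout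

/-- `G ≳ H`. -/
def Ge (G H : WT) : Prop := Le H G

/-- `G ≈ H` : equivalence of scoring games. -/
def Equiv (G H : WT) : Prop :=
  ∀ X : WT, X.Wt → (G.add X).Lout = (H.add X).Lout ∧ (G.add X).Rout = (H.add X).Rout

/-- `G` and `H` are well-tempered with the same parity. -/
def SamePar (G H : WT) : Prop := ∃ p, IsWT G p ∧ IsWT H p

/-- `G` takes values in `S`: every integer subgame lies in `S`. -/
inductive Valued (S : Set ℤ) : WT → Prop where
  | int {n : ℤ} : n ∈ S → Valued S (WT.int n)
  | node {L R : List WT} : (∀ g ∈ L, Valued S g) → (∀ g ∈ R, Valued S g) →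
      Valued S (WT.node L R)

/-- `Subgame H G` : `H` is a subgame of `G`. -/
inductive Subgame : WT → WT → Prop where
  | refl (G : WT) : Subgame G G
  | left {H G' : WT} {L R : List WT} : G' ∈ L → Subgame H G' → Subgame H (WT.node L R)
  | right {H G' : WT} {L R : List WT} : G' ∈ R → Subgame H G' → Subgame H (WT.node L R)

/-- `gap G p` : supremum of `R(H) - L(H)` over subgames `H` of `G` of parity `p`
(as an element of `WithBot ℤ`; the supremum of the empty set is `⊥ = -∞`). -/
noncomputable def gap (G : WT) (p : Bool) : WithBot ℤ :=
  sSup {x : WithBot ℤ | ∃ H : WT, Subgame H G ∧ IsWT H p ∧ x = ((H.Rout - H.Lout : ℤ) : WithBot ℤ)}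

/-- Heating by `t`. -/
def heat (t : ℤ) : WT → WT
  | int n => int n
  | node L R =>
    node ((WT.node L R).lopts.attach.map fun g => (WT.int t).add (heat t g.1))
         ((WT.node L R).ropts.attach.map fun g => (WT.int (-t)).add (heat t g.1))
termination_by G => sizeOf G
decreasing_by
  all_goals
    first
      | exact sizeOf_lt_of_mem_lopts g.2
      | exact sizeOf_lt_of_mem_ropts g.2

end WT

/-- `i·x` for `i ∈ {0,1}`, `x ∈ ℤ ∪ {-∞}`: equals `x` if `i = 1` and `0` if `i = 0`
(even when `x = -∞`). -/
noncomputable def bmul (i : Bool) (x : WithBot ℤ) : WithBot ℤ :=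
  if i then x else ((0 : ℤ) : WithBot ℤ)

/-!
Both bounds are proved together by induction on the sum. Right's best move in `G + H` is to some
`Gᴿ + H` or `G + Hᴿ`; in the first case the bound on `L(Gᴿ + H)` together with `R(G) ≤ L(Gᴿ)`
gives the bound on `R(G + H)`, and the second case is the first with the components swapped,
since the outcomes of a sum do not depend on the order of the summands. For `L(G + H)`, Left
moves to a `Gᴸ + H` with `R(Gᴸ) = L(G)` and the bound on `R(Gᴸ + H)` applies; if `G` is an
integer `a`, Left has to move in `H`, which gives `L(a + H) ≥ a + L(H)`, and the difference
`R(H) - L(H)` is paid for by `gap_{π(H)}(H)`. The parities match because the options of a game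
of parity `p` have parity `1 - p`, and the gaps of an option are at most those of the game.
-/

@[simp] theorem bmul_true (x : WithBot ℤ) : bmul true x = x := rfl

@[simp] theorem bmul_false (x : WithBot ℤ) : bmul false x = 0 := rfl

theorem bmul_mono (i : Bool) {x y : WithBot ℤ} (h : x ≤ y) : bmul i x ≤ bmul i y := by
  cases i <;> simp [h]

theorem bmul_nonpos (i : Bool) {x : WithBot ℤ} (h : x ≤ 0) : bmul i x ≤ 0 := by
  cases i <;> simp [h]

namespace WT

theorem lmax_eq_getD (l : List ℤ) : lmax l = l.max?.getD 0 := by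
  cases l <;> rfl

theorem lmin_eq_getD (l : List ℤ) : lmin l = l.min?.getD 0 := by
  cases l <;> rfl

theorem lmax_mem {l : List ℤ} (h : l ≠ []) : lmax l ∈ l := by
  rw [lmax_eq_getD, List.max?_eq_some_max h]
  exact List.max_mem h

theorem lmin_mem {l : List ℤ} (h : l ≠ []) : lmin l ∈ l := by
  rw [lmin_eq_getD, List.min?_eq_some_min h]
  exact List.min_mem h

theorem le_lmax_of_mem {l : List ℤ} {x : ℤ} (h : x ∈ l) : x ≤ lmax l := by
  rw [lmax_eq_getD, List.max?_eq_some_max (List.ne_nil_of_mem h)]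
  exact List.le_max_of_mem h

theorem lmin_le_of_mem {l : List ℤ} {x : ℤ} (h : x ∈ l) : lmin l ≤ x := by
  rw [lmin_eq_getD, List.min?_eq_some_min (List.ne_nil_of_mem h)]
  exact List.min_le_of_mem h

theorem lmax_append_comm (l₁ l₂ : List ℤ) : lmax (l₁ ++ l₂) = lmax (l₂ ++ l₁) := by
  rw [lmax_eq_getD, lmax_eq_getD]
  congr 1
  exact Option.ext fun a => by simp only [List.max?_eq_some_iff, List.mem_append, or_comm]

theorem lmin_append_comm (l₁ l₂ : List ℤ) : lmin (l₁ ++ l₂) = lmin (l₂ ++ l₁) := by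
  rw [lmin_eq_getD, lmin_eq_getD]
  congr 1
  exact Option.ext fun a => by simp only [List.min?_eq_some_iff, List.mem_append, or_comm]

@[simp] theorem Lout_int (n : ℤ) : (int n).Lout = n := by
  rw [Lout, out]

@[simp] theorem Rout_int (n : ℤ) : (int n).Rout = n := by
  rw [Rout, out]

theorem out_node (L R : List WT) :
    (node L R).out = (lmax (L.map Rout), lmin (R.map Lout)) := by
  rw [out]
  simp only [lopts, ropts, List.map_attach_eq_pmap, List.pmap_eq_map]
  rfl

theorem Rout_le_Lout_of_mem_lopts {G g : WT} (hg : g ∈ G.lopts) : g.Rout ≤ G.Lout := by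
  cases G with
  | int n => simp [lopts] at hg
  | node L R =>
    simpa [lopts, Lout, out_node] using le_lmax_of_mem (List.mem_map_of_mem (f := Rout) hg)

theorem Rout_le_Lout_of_mem_ropts {G g : WT} (hg : g ∈ G.ropts) : G.Rout ≤ g.Lout := by
  cases G with
  | int n => simp [ropts] at hg
  | node L R =>
    simpa [ropts, Rout, out_node] using lmin_le_of_mem (List.mem_map_of_mem (f := Lout) hg)

theorem exists_mem_lopts_Rout_eq {G : WT} (h : G.lopts ≠ []) :
    ∃ g ∈ G.lopts, g.Rout = G.Lout := by
  cases G with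
  | int n => simp [lopts] at h
  | node L R =>
    simpa [lopts, Lout, out_node] using lmax_mem (l := L.map Rout) (by simpa [lopts] using h)

theorem exists_mem_ropts_Lout_eq {G : WT} (h : G.ropts ≠ []) :
    ∃ g ∈ G.ropts, g.Lout = G.Rout := by
  cases G with
  | int n => simp [ropts] at h
  | node L R =>
    simpa [ropts, Rout, out_node] using lmin_mem (l := R.map Lout) (by simpa [ropts] using h)

@[simp] theorem int_add_int (m n : ℤ) : (int m).add (int n) = int (m + n) := by
  rw [add]

theorem add_eq_node {G H : WT} (h : ¬∃ m n, G = int m ∧ H = int n) :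
    G.add H = node (G.lopts.map (·.add H) ++ H.lopts.map G.add)
      (G.ropts.map (·.add H) ++ H.ropts.map G.add) := by
  rw [add.eq_2 G H fun m n hG hH => h ⟨m, n, hG, hH⟩]
  simp only [List.map_attach_eq_pmap, List.pmap_eq_map]

@[simp] theorem lopts_add (G H : WT) :
    (G.add H).lopts = G.lopts.map (·.add H) ++ H.lopts.map G.add := by
  by_cases h : ∃ m n, G = int m ∧ H = int n
  · obtain ⟨m, n, rfl, rfl⟩ := h
    simp [lopts]
  · rw [add_eq_node h, lopts]

@[simp] theorem ropts_add (G H : WT) :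
    (G.add H).ropts = G.ropts.map (·.add H) ++ H.ropts.map G.add := by
  by_cases h : ∃ m n, G = int m ∧ H = int n
  · obtain ⟨m, n, rfl, rfl⟩ := h
    simp [ropts]
  · rw [add_eq_node h, ropts]

theorem add_mem_lopts_add_left {G g : WT} (H : WT) (hg : g ∈ G.lopts) :
    g.add H ∈ (G.add H).lopts := by
  rw [lopts_add]
  exact List.mem_append_left _ (List.mem_map_of_mem hg)

theorem add_mem_lopts_add_right (G : WT) {H h : WT} (hh : h ∈ H.lopts) :
    G.add h ∈ (G.add H).lopts := by
  rw [lopts_add]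
  exact List.mem_append_right _ (List.mem_map_of_mem hh)

theorem out_add_comm (G H : WT) : (G.add H).out = (H.add G).out := by
  by_cases h : ∃ m n, G = int m ∧ H = int n
  · obtain ⟨m, n, rfl, rfl⟩ := h
    rw [int_add_int, int_add_int, Int.add_comm]
  · have h' : ¬∃ m n, H = int m ∧ G = int n := fun ⟨m, n, hH, hG⟩ => h ⟨n, m, hG, hH⟩
    rw [add_eq_node h, add_eq_node h', out_node, out_node]
    simp only [List.map_append, List.map_map]
    rw [lmax_append_comm, lmin_append_comm]
    congr 3 <;> refine List.map_congr_left fun g hg => ?_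
    · exact congrArg Prod.snd (out_add_comm G g)
    · exact congrArg Prod.snd (out_add_comm g H)
    · exact congrArg Prod.fst (out_add_comm G g)
    · exact congrArg Prod.fst (out_add_comm g H)
termination_by sizeOf G + sizeOf H
decreasing_by
  all_goals first
    | (have := sizeOf_lt_of_mem_lopts hg; omega)
    | (have := sizeOf_lt_of_mem_ropts hg; omega)

theorem Lout_add_comm (G H : WT) : (G.add H).Lout = (H.add G).Lout :=
  congrArg Prod.fst (out_add_comm G H)

theorem IsWT.of_mem_lopts {G g : WT} {p : Bool} (hG : IsWT G p) (hg : g ∈ G.lopts) :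
    IsWT g (!p) := by
  cases hG with
  | int n => simp [lopts] at hg
  | node _ _ hLp _ => simpa using hLp g hg

theorem IsWT.of_mem_ropts {G g : WT} {p : Bool} (hG : IsWT G p) (hg : g ∈ G.ropts) :
    IsWT g (!p) := by
  cases hG with
  | int n => simp [ropts] at hg
  | node _ _ _ hRp => simpa using hRp g hg

theorem IsWT.eq_int_of_lopts_eq_nil {G : WT} {p : Bool} (hG : IsWT G p) (h : G.lopts = []) :
    ∃ n, G = WT.int n := by
  cases hG with
  | int n => exact ⟨n, rfl⟩
  | node hL => exact absurd h hL

theorem IsWT.eq_int_of_ropts_eq_nil {G : WT} {p : Bool} (hG : IsWT G p) (h : G.ropts = []) :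
    ∃ n, G = WT.int n := by
  cases hG with
  | int n => exact ⟨n, rfl⟩
  | node _ hR => exact absurd h hR

theorem Subgame.of_mem_lopts {G g K : WT} (hg : g ∈ G.lopts) (hK : Subgame K g) :
    Subgame K G := by
  cases G with
  | int n => simp [lopts] at hg
  | node L R => exact .left hg hK

theorem Subgame.of_mem_ropts {G g K : WT} (hg : g ∈ G.ropts) (hK : Subgame K g) :
    Subgame K G := by
  cases G with
  | int n => simp [ropts] at hg
  | node L R => exact .right hg hK

theorem finite_setOf_subgame (G : WT) : {K | Subgame K G}.Finite := by
  match G with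
  | int n =>
    refine (Set.finite_singleton (int n)).subset ?_
    rintro K hK
    cases hK
    rfl
  | node L R =>
    have hL := L.finite_toSet.biUnion fun g _ => finite_setOf_subgame g
    have hR := R.finite_toSet.biUnion fun g _ => finite_setOf_subgame g
    refine ((hL.union hR).insert (node L R)).subset ?_
    rintro K (_ | ⟨hg, hK⟩ | ⟨hg, hK⟩)
    · exact Set.mem_insert _ _
    · exact Or.inr (Or.inl (Set.mem_biUnion hg hK))
    · exact Or.inr (Or.inr (Set.mem_biUnion hg hK))
termination_by sizeOf G
decreasing_by
  all_goals
    have := List.sizeOf_lt_of_mem ‹_›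
    simp only [node.sizeOf_spec]
    omega

theorem bddAbove_gapSet (G : WT) (p : Bool) :
    BddAbove {x : WithBot ℤ | ∃ K : WT, Subgame K G ∧ IsWT K p ∧
      x = ((K.Rout - K.Lout : ℤ) : WithBot ℤ)} := by
  refine ((finite_setOf_subgame G).image
    fun K => ((K.Rout - K.Lout : ℤ) : WithBot ℤ)).bddAbove.mono ?_
  rintro _ ⟨K, hK, -, rfl⟩
  exact ⟨K, hK, rfl⟩

theorem le_gap {G : WT} {p : Bool} (hG : IsWT G p) :
    ((G.Rout - G.Lout : ℤ) : WithBot ℤ) ≤ G.gap p :=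
  le_csSup (bddAbove_gapSet G p) ⟨G, .refl G, hG, rfl⟩

theorem gap_mono {G G' : WT} (h : ∀ K, Subgame K G → Subgame K G') (p : Bool) :
    G.gap p ≤ G'.gap p :=
  csSup_le_csSup' (bddAbove_gapSet G' p) fun _ ⟨K, hK, hp, hx⟩ => ⟨K, h K hK, hp, hx⟩

theorem gap_int_nonpos (n : ℤ) (p : Bool) : (int n).gap p ≤ 0 :=
  csSup_le' fun _ ⟨K, hK, _, hx⟩ => by cases hK; simp [hx]

def RightOutcomeBound (G H : WT) : Prop :=
  ∀ p q, IsWT G p → IsWT H q →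
    (G.Rout : WithBot ℤ) + H.Rout ≤ (G.add H).Rout + max (bmul q (G.gap p)) (bmul p (H.gap q))

def LeftOutcomeBound (G H : WT) : Prop :=
  ∀ p q, IsWT G p → IsWT H q →
    (G.Lout : WithBot ℤ) + H.Rout ≤
      (G.add H).Lout + max (bmul q (G.gap (!p))) (bmul (!p) (H.gap q))

theorem Rout_add_Rout_le_of_mem_ropts {G H g : WT} {p q : Bool} (hG : IsWT G p) (hH : IsWT H q)
    (hg : g ∈ G.ropts) (hgH : LeftOutcomeBound g H) :
    (G.Rout : WithBot ℤ) + H.Rout ≤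
      (g.add H).Lout + max (bmul q (G.gap p)) (bmul p (H.gap q)) := by
  have hbound := hgH (!p) q (hG.of_mem_ropts hg) hH
  rw [Bool.not_not] at hbound
  calc (G.Rout : WithBot ℤ) + H.Rout ≤ g.Lout + H.Rout := by
        gcongr; exact_mod_cast Rout_le_Lout_of_mem_ropts hg
    _ ≤ (g.add H).Lout + max (bmul q (g.gap p)) (bmul p (H.gap q)) := hbound
    _ ≤ _ := by
        gcongr
        exact bmul_mono q (gap_mono (fun _ => Subgame.of_mem_ropts hg) p)

theorem rightOutcomeBound_of_options {G H : WT} (ihG : ∀ g ∈ G.ropts, LeftOutcomeBound g H)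
    (ihH : ∀ h ∈ H.ropts, LeftOutcomeBound h G) : RightOutcomeBound G H := by
  intro p q hG hH
  by_cases hnil : (G.add H).ropts = []
  · simp only [ropts_add, List.append_eq_nil_iff, List.map_eq_nil_iff] at hnil
    obtain ⟨a, rfl⟩ := hG.eq_int_of_ropts_eq_nil hnil.1
    obtain ⟨b, rfl⟩ := hH.eq_int_of_ropts_eq_nil hnil.2
    cases hG
    cases hH
    simp
  obtain ⟨X, hX, hXR⟩ := exists_mem_ropts_Lout_eq hnil
  rw [← hXR]
  simp only [ropts_add, List.mem_append, List.mem_map] at hX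
  rcases hX with ⟨g, hg, rfl⟩ | ⟨h, hh, rfl⟩
  · exact Rout_add_Rout_le_of_mem_ropts hG hH hg (ihG g hg)
  · have hbound := Rout_add_Rout_le_of_mem_ropts hH hG hh (ihH h hh)
    rwa [add_comm, max_comm, Lout_add_comm] at hbound

theorem add_Lout_le_Lout_int_add (a : ℤ) {H : WT} {q : Bool} (hH : IsWT H q)
    (ih : ∀ h ∈ H.lopts, RightOutcomeBound (int a) h) :
    a + H.Lout ≤ ((int a).add H).Lout := by
  by_cases hnil : H.lopts = []
  · obtain ⟨b, rfl⟩ := hH.eq_int_of_lopts_eq_nil hnil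
    simp
  obtain ⟨h, hh, hhR⟩ := exists_mem_lopts_Rout_eq hnil
  have hbound := ih h hh false (!q) (.int a) (hH.of_mem_lopts hh)
  have hmax : max (bmul (!q) ((int a).gap false)) (bmul false (h.gap (!q))) ≤ 0 :=
    max_le (bmul_nonpos _ (gap_int_nonpos a false)) le_rfl
  have hshift : a + h.Rout ≤ ((int a).add h).Rout := by
    have := hbound.trans (add_le_of_nonpos_right hmax)
    rw [Rout_int] at this
    exact_mod_cast this
  rw [← hhR]
  exact hshift.trans (Rout_le_Lout_of_mem_lopts (add_mem_lopts_add_right _ hh))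

theorem leftOutcomeBound_of_options {G H : WT} (ihG : ∀ g ∈ G.lopts, RightOutcomeBound g H)
    (ihH : ∀ h ∈ H.lopts, RightOutcomeBound G h) : LeftOutcomeBound G H := by
  intro p q hG hH
  by_cases hnil : G.lopts = []
  · obtain ⟨a, rfl⟩ := hG.eq_int_of_lopts_eq_nil hnil
    cases hG
    calc ((int a).Lout : WithBot ℤ) + H.Rout
        = ((a + H.Lout : ℤ) : WithBot ℤ) + ((H.Rout - H.Lout : ℤ) : WithBot ℤ) := by
          rw [Lout_int, ← WithBot.coe_add, ← WithBot.coe_add, add_add_sub_cancel]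
      _ ≤ ((int a).add H).Lout + H.gap q :=
          add_le_add (WithBot.coe_le_coe.2 (add_Lout_le_Lout_int_add a hH ihH)) (le_gap hH)
      _ ≤ _ := by gcongr; exact le_max_right _ _
  obtain ⟨g, hg, hgR⟩ := exists_mem_lopts_Rout_eq hnil
  have hbound := ihG g hg (!p) q (hG.of_mem_lopts hg) hH
  calc (G.Lout : WithBot ℤ) + H.Rout = g.Rout + H.Rout := by rw [hgR]
    _ ≤ (g.add H).Rout + max (bmul q (g.gap (!p))) (bmul (!p) (H.gap q)) := hbound
    _ ≤ _ := by
        gcongr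
        · exact_mod_cast Rout_le_Lout_of_mem_lopts (add_mem_lopts_add_left _ hg)
        · exact bmul_mono q (gap_mono (fun _ => Subgame.of_mem_lopts hg) _)

theorem rightOutcomeBound_and_leftOutcomeBound (G H : WT) :
    RightOutcomeBound G H ∧ LeftOutcomeBound G H :=
  ⟨rightOutcomeBound_of_options (fun g _ => (rightOutcomeBound_and_leftOutcomeBound g H).2)
      (fun h _ => (rightOutcomeBound_and_leftOutcomeBound h G).2),
    leftOutcomeBound_of_options (fun g _ => (rightOutcomeBound_and_leftOutcomeBound g H).1)
      (fun h _ => (rightOutcomeBound_and_leftOutcomeBound G h).1)⟩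
termination_by sizeOf G + sizeOf H
decreasing_by
  all_goals first
    | (have := sizeOf_lt_of_mem_lopts ‹_›; omega)
    | (have := sizeOf_lt_of_mem_ropts ‹_›; omega)

end WT

/-- The subtracted maximum is moved to the other side, since `-∞` cannot be subtracted in
`WithBot ℤ`. -/
theorem sum_outcome_bounds (G H : WT) (p q : Bool) (hG : WT.IsWT G p) (hH : WT.IsWT H q) :
    ((G.Rout : WithBot ℤ) + (H.Rout : WithBot ℤ) ≤
      ((G.add H).Rout : WithBot ℤ) + max (bmul q (G.gap p)) (bmul p (H.gap q))) ∧
    ((G.Lout : WithBot ℤ) + (H.Rout : WithBot ℤ) ≤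
      ((G.add H).Lout : WithBot ℤ) + max (bmul q (G.gap (!p))) (bmul (!p) (H.gap q))) :=
  ⟨(WT.rightOutcomeBound_and_leftOutcomeBound G H).1 p q hG hH,
    (WT.rightOutcomeBound_and_leftOutcomeBound G H).2 p q hG hH⟩
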